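/- arXiv:1804.09878 — 2 statements merged into one kernel-verified Lean document; each statement's English description precedes it below -/
import Mathlib

section
/- For every c ∈ L^×, the dual lattice of O_L with respect to the scaled trace pairing equals c^{-1}·O_L; that is, {x ∈ L : Tr_{L/F}(c·x·y) ∈ O_F for all y ∈ O_L} = c^{-1}·O_L. (In particular, taking c = 1, the trace-form dual of O_L is O_L itself.) -/
/-- An element `ϖ` of a field `K` is a uniformizer of a subring `O` (thought of
as a valuation ring of `K`) if `ϖ` is a nonzero nonunit of `O` generating the
maximal ideal of `O`, i.e. every nonunit of `O` is divisible by `ϖ` in `O`. -/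
def IsUniformizer {K : Type*} [Field K] (O : Subring K) (ϖ : K) : Prop :=
  ϖ ∈ O ∧ ϖ ≠ 0 ∧ ϖ⁻¹ ∉ O ∧ ∀ x ∈ O, (x = 0 ∨ x⁻¹ ∉ O) → x / ϖ ∈ O

/-!
Write `A = O_F` and `B = O_L`. Since a uniformizer `ϖ` of `A` stays a uniformizer of `B`, the ring
`B/ϖB` is the residue field of `B`, a finite, hence separable, extension of the finite residue field
of `A`; so its trace form is nondegenerate. As the trace of `B/A` reduces modulo `ϖ` to the trace of
`B/ϖB` over `A/ϖA`, an element `z ∈ B` with `Tr(zB) ⊆ ϖA` lies in `ϖB`. Thus if `x` is in the trace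
dual of `B` and `ϖx ∈ B`, then `x ∈ B`; since `ϖⁿx ∈ B` for some `n`, the trace dual of `B` is `B`
itself, and the claim follows by applying this to `cx`.
-/

open IsLocalRing

theorem IsLocalRing.of_dvd_of_not_isUnit {R : Type*} [CommRing R] [Nontrivial R] {π : R}
    (hπ : ¬ IsUnit π) (hdvd : ∀ x : R, ¬ IsUnit x → π ∣ x) : IsLocalRing R :=
  .of_nonunits_add fun a b ha hb => by
    obtain ⟨a, rfl⟩ := hdvd a ha
    obtain ⟨b, rfl⟩ := hdvd b hb
    rw [← mul_add]
    exact fun hu => hπ (isUnit_of_mul_isUnit_left hu)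

theorem IsLocalRing.maximalIdeal_eq_span_of_dvd {R : Type*} [CommRing R] [IsLocalRing R] {π : R}
    (hπ : ¬ IsUnit π) (hdvd : ∀ x : R, ¬ IsUnit x → π ∣ x) :
    maximalIdeal R = Ideal.span {π} := by
  ext x
  rw [mem_maximalIdeal, mem_nonunits_iff, Ideal.mem_span_singleton]
  refine ⟨hdvd x, ?_⟩
  rintro ⟨y, rfl⟩ hu
  exact hπ (isUnit_of_mul_isUnit_left hu)

theorem Subalgebra.isUnit_iff_inv_mem {R K : Type*} [CommRing R] [Field K] [Algebra R K]
    {S : Subalgebra R K} (x : S) : IsUnit x ↔ (x : K) ≠ 0 ∧ (x : K)⁻¹ ∈ S := by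
  refine ⟨fun hx => ?_, fun ⟨h0, hinv⟩ => ?_⟩
  · obtain ⟨y, hy⟩ := hx.exists_right_inv
    have hxy : (x : K) * y = 1 := congrArg Subtype.val hy
    exact ⟨left_ne_zero_of_mul_eq_one hxy, inv_eq_of_mul_eq_one_right hxy ▸ y.2⟩
  · exact .of_mul_eq_one ⟨_, hinv⟩ (Subtype.ext (mul_inv_cancel₀ h0))

namespace IsUniformizer

variable {R K : Type*} [CommRing R] [Field K] [Algebra R K] {S : Subalgebra R K} {ϖ : K}

theorem not_isUnit (h : IsUniformizer S.toSubring ϖ) : ¬ IsUnit (⟨ϖ, h.1⟩ : S) := fun hu =>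
  h.2.2.1 ((Subalgebra.isUnit_iff_inv_mem _).mp hu).2

theorem dvd_of_not_isUnit (h : IsUniformizer S.toSubring ϖ) {x : S} (hx : ¬ IsUnit x) :
    (⟨ϖ, h.1⟩ : S) ∣ x := by
  rw [Subalgebra.isUnit_iff_inv_mem, not_and_or, not_ne_iff] at hx
  refine ⟨⟨x / ϖ, h.2.2.2 x x.2 hx⟩, Subtype.ext ?_⟩
  exact (mul_div_cancel₀ (x : K) h.2.1).symm

theorem isLocalRing (h : IsUniformizer S.toSubring ϖ) : IsLocalRing S :=
  .of_dvd_of_not_isUnit h.not_isUnit fun _ => h.dvd_of_not_isUnit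

theorem maximalIdeal_eq_span (h : IsUniformizer S.toSubring ϖ) [IsLocalRing S] :
    maximalIdeal S = Ideal.span {⟨ϖ, h.1⟩} :=
  maximalIdeal_eq_span_of_dvd h.not_isUnit fun _ => h.dvd_of_not_isUnit

theorem isDiscreteValuationRing (h : IsUniformizer S.toSubring ϖ) [IsNoetherianRing S] :
    IsDiscreteValuationRing S := by
  have := h.isLocalRing
  have hnf : ¬ IsField S := by
    rw [isField_iff_maximalIdeal_eq, h.maximalIdeal_eq_span, Ideal.span_singleton_eq_bot]
    exact fun h0 => h.2.1 (congrArg Subtype.val h0)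
  have hprinc : (maximalIdeal S).IsPrincipal := ⟨⟨_, h.maximalIdeal_eq_span⟩⟩
  exact ((IsDiscreteValuationRing.TFAE S hnf).out 0 4).mpr hprinc

end IsUniformizer

theorem mem_maximalIdeal_of_intTrace_mul_mem {R S : Type*} [CommRing R] [CommRing S]
    [IsDedekindDomain R] [IsLocalRing R] [Finite (ResidueField R)]
    [IsDomain S] [IsIntegrallyClosed S] [IsLocalRing S] [Algebra R S]
    [Module.IsTorsionFree R S] [Module.Finite R S]
    (hmax : (maximalIdeal R).map (algebraMap R S) = maximalIdeal S) {z : S}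
    (hz : ∀ y, Algebra.intTrace R S (z * y) ∈ maximalIdeal R) :
    z ∈ maximalIdeal S := by
  set mS := (maximalIdeal R).map (algebraMap R S)
  have : mS.IsMaximal := hmax ▸ maximalIdeal.isMaximal S
  let : Field (R ⧸ maximalIdeal R) := Ideal.Quotient.field _
  let : Field (S ⧸ mS) := Ideal.Quotient.field _
  have : Finite (R ⧸ maximalIdeal R) := ‹Finite (ResidueField R)›
  have : PerfectField (R ⧸ maximalIdeal R) := PerfectField.ofFinite
  have : Algebra.IsAlgebraic (R ⧸ maximalIdeal R) (S ⧸ mS) := Algebra.IsAlgebraic.of_finite _ _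
  have hz0 : Ideal.Quotient.mk mS z = 0 := by
    refine (traceForm_nondegenerate (R ⧸ maximalIdeal R) (S ⧸ mS)).1 _ fun y => ?_
    obtain ⟨y, rfl⟩ := Ideal.Quotient.mk_surjective y
    rw [Algebra.traceForm_apply, ← map_mul, Algebra.trace_quotient_eq_of_isDedekindDomain,
      Ideal.Quotient.eq_zero_iff_mem]
    exact hz y
  rwa [Ideal.Quotient.eq_zero_iff_mem, hmax] at hz0

theorem IsDiscreteValuationRing.exists_pow_smul_mem_one {A K L B : Type*} [CommRing A] [IsDomain A]
    [IsDiscreteValuationRing A] [Field K] [Algebra A K] [IsFractionRing A K]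
    [Field L] [Algebra K L] [Algebra.IsAlgebraic K L] [Algebra A L] [IsScalarTower A K L]
    [CommRing B] [Algebra A B] [Algebra B L] [IsScalarTower A B L] [IsIntegralClosure B A L]
    {ϖ : A} (hϖ : Irreducible ϖ) (x : L) : ∃ n : ℕ, ϖ ^ n • x ∈ (1 : Submodule B L) := by
  obtain ⟨a, ha0, hint⟩ := ((IsFractionRing.isAlgebraic_iff A K L).mpr
    (Algebra.IsAlgebraic.isAlgebraic x)).exists_integral_multiple
  obtain ⟨n, u, rfl⟩ := IsDiscreteValuationRing.eq_unit_mul_pow_irreducible ha0 hϖ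
  refine ⟨n, ?_⟩
  have : (↑u * ϖ ^ n) • x ∈ (1 : Submodule B L) := by
    rw [Submodule.mem_one]
    exact IsIntegralClosure.isIntegral_iff.mp hint
  simpa [smul_smul] using Submodule.smul_of_tower_mem _ (↑u⁻¹ : A) this

section
variable {A K L B : Type*} [CommRing A] [IsDomain A] [IsDiscreteValuationRing A]
  [Finite (ResidueField A)] [Field K] [Algebra A K] [IsFractionRing A K]
  [Field L] [Algebra K L] [FiniteDimensional K L] [Algebra.IsSeparable K L]
  [Algebra A L] [IsScalarTower A K L]
  [CommRing B] [IsDomain B] [IsLocalRing B] [Algebra A B] [Algebra B L] [IsScalarTower A B L]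
  [IsIntegralClosure B A L]

theorem Submodule.mem_one_of_smul_mem_of_mem_traceDual
    (hmax : (maximalIdeal A).map (algebraMap A B) = maximalIdeal B) {ϖ : A} (hϖ : Irreducible ϖ)
    {x : L} (hx : x ∈ Submodule.traceDual A K (1 : Submodule B L))
    (hϖx : ϖ • x ∈ (1 : Submodule B L)) : x ∈ (1 : Submodule B L) := by
  have : IsDedekindDomain B := IsIntegralClosure.isDedekindDomain A K L B
  have : Module.Finite A B := IsIntegralClosure.finite A K L B
  have : FaithfulSMul A B := .of_field_isFractionRing A B K L
  have : FaithfulSMul A L := .of_field_isFractionRing A L K L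
  obtain ⟨z, hz⟩ := Submodule.mem_one.mp hϖx
  have hzm : z ∈ maximalIdeal B := by
    refine mem_maximalIdeal_of_intTrace_mul_mem hmax fun y => ?_
    obtain ⟨a, ha⟩ := Submodule.mem_traceDual.mp hx _ (Submodule.mem_one.mpr ⟨y, rfl⟩)
    have : Algebra.intTrace A B (z * y) = ϖ * a := by
      apply IsFractionRing.injective A K
      rw [Algebra.algebraMap_intTrace (K := K) (L := L), map_mul, hz, ← algebraMap_smul K,
        smul_mul_assoc, LinearMap.map_smul, smul_eq_mul, map_mul (algebraMap A K), ha,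
        Algebra.traceForm_apply]
    rw [this, hϖ.maximalIdeal_eq]
    exact Ideal.mul_mem_right _ _ (Ideal.mem_span_singleton_self ϖ)
  rw [← hmax, hϖ.maximalIdeal_eq, Ideal.map_span, Set.image_singleton,
    Ideal.mem_span_singleton] at hzm
  obtain ⟨b, rfl⟩ := hzm
  refine Submodule.mem_one.mpr ⟨b, smul_right_injective L hϖ.ne_zero ?_⟩
  simp only [← hz, map_mul, Algebra.smul_def, ← IsScalarTower.algebraMap_apply]

theorem Submodule.traceDual_one_eq_one_of_map_maximalIdeal
    (hmax : (maximalIdeal A).map (algebraMap A B) = maximalIdeal B) :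
    Submodule.traceDual A K (1 : Submodule B L) = 1 := by
  refine le_antisymm (fun x hx => ?_) Submodule.one_le_traceDual_one
  obtain ⟨ϖ, hϖ⟩ := IsDiscreteValuationRing.exists_irreducible A
  obtain ⟨n, hn⟩ := IsDiscreteValuationRing.exists_pow_smul_mem_one (K := K) (B := B) hϖ x
  induction n with
  | zero => simpa using hn
  | succ n ih =>
    refine ih (mem_one_of_smul_mem_of_mem_traceDual hmax hϖ (smul_of_tower_mem _ _ hx) ?_)
    rwa [smul_smul, ← pow_succ']

end

theorem Subalgebra.mem_traceDual_one_iff {R K L : Type*} [CommRing R] [Field K] [Field L]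
    [Algebra R K] [Algebra K L] {A : Subalgebra R K} {B : Subalgebra A L} {x : L} :
    x ∈ Submodule.traceDual A K (1 : Submodule B L) ↔ ∀ y ∈ B, Algebra.trace K L (x * y) ∈ A := by
  simp [Submodule.mem_traceDual, Submodule.mem_one, Subalgebra.range_algebraMap]

/-- For `L/F` a finite unramified extension of finite extensions
of `ℚ_p` and every `c ∈ L^×`, the dual lattice of `O_L` with respect to the
scaled trace pairing `(x, y) ↦ Tr_{L/F}(c·x·y)` is exactly `c⁻¹·O_L`:
`{x ∈ L : Tr_{L/F}(c·x·y) ∈ O_F for all y ∈ O_L} = c⁻¹·O_L`. -/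
theorem statement12 (p : ℕ) [Fact p.Prime]
    (F : Type*) [Field F] [Algebra ℚ_[p] F] [Algebra ℤ_[p] F]
    [IsScalarTower ℤ_[p] ℚ_[p] F] [FiniteDimensional ℚ_[p] F]
    (L : Type*) [Field L] [Algebra ℚ_[p] L] [Algebra ℤ_[p] L]
    [IsScalarTower ℤ_[p] ℚ_[p] L]
    [Algebra F L] [IsScalarTower ℚ_[p] F L] [FiniteDimensional F L]
    (O_F : Subring F) (O_L : Subring L)
    (hOF : ∀ x : F, x ∈ O_F ↔ IsIntegral ℤ_[p] x)
    (hOL : ∀ x : L, x ∈ O_L ↔ IsIntegral ℤ_[p] x)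
    (hur : ∃ ϖ : F, IsUniformizer O_F ϖ ∧ IsUniformizer O_L (algebraMap F L ϖ))
    (c : L) (hc : c ≠ 0) :
    ∀ x : L,
      (∀ y ∈ O_L, Algebra.trace F L (c * x * y) ∈ O_F)
        ↔ ∃ z ∈ O_L, x = c⁻¹ * z := by
  obtain ⟨ϖ, hϖF, hϖL⟩ := hur
  have : IsScalarTower ℤ_[p] F L := .of_algebraMap_eq fun x => by
    rw [IsScalarTower.algebraMap_apply ℤ_[p] ℚ_[p] L, IsScalarTower.algebraMap_apply ℚ_[p] F L,
      IsScalarTower.algebraMap_apply ℤ_[p] ℚ_[p] F]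
  set A := integralClosure ℤ_[p] F
  set B := integralClosure A L
  obtain rfl : O_F = A.toSubring := Subring.ext hOF
  obtain rfl : O_L = B.toSubring := Subring.ext fun x =>
    (hOL x).trans ⟨IsIntegral.tower_top, fun h => isIntegral_trans _ h⟩
  have : CharZero F := charZero_of_injective_algebraMap (algebraMap ℚ_[p] F).injective
  have : IsFractionRing A F := IsIntegralClosure.isFractionRing_of_finite_extension ℤ_[p] ℚ_[p] F A
  have : IsDedekindDomain A := integralClosure.isDedekindDomain ℤ_[p] ℚ_[p] F
  have : IsDiscreteValuationRing A := hϖF.isDiscreteValuationRing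
  have : Module.Finite ℤ_[p] A := IsIntegralClosure.finite ℤ_[p] ℚ_[p] F A
  have : FaithfulSMul ℤ_[p] A := .of_field_isFractionRing ℤ_[p] A ℚ_[p] F
  have : Finite (ResidueField A) := ResidueField.finite_of_finite (R := ℤ_[p]) inferInstance
  have : IsLocalRing B := hϖL.isLocalRing
  have hmax : (maximalIdeal A).map (algebraMap A B) = maximalIdeal B := by
    rw [hϖF.maximalIdeal_eq_span, hϖL.maximalIdeal_eq_span, Ideal.map_span, Set.image_singleton]
    rfl
  have hdual := Submodule.traceDual_one_eq_one_of_map_maximalIdeal (K := F) (L := L) hmax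
  intro x
  simp only [Subalgebra.mem_toSubring]
  rw [← Subalgebra.mem_traceDual_one_iff, hdual, Submodule.mem_one]
  simp_rw [eq_inv_mul_iff_mul_eq₀ hc, eq_comm (a := c * x)]
  exact ⟨fun ⟨z, hz⟩ => ⟨z, z.2, hz⟩, fun ⟨z, hz, hzx⟩ => ⟨⟨z, hz⟩, hzx⟩⟩
end

section
/- Let 𝓛 be a lattice in W whose dual lattice 𝓛̃ satisfies ϖ·𝓛̃ ⊆ 𝓛 ⊆ 𝓛̃. Then: (a) reducing ω modulo the maximal ideal induces a well-defined alternating k-bilinear form ω̄ on the k-vector space 𝓛/ϖ𝓛̃ (given by ω̄(x̄, ȳ) = ω(x,y) mod ϖ), and ω̄ is nondegenerate; (b) the scaled form ϖ·ω induces a well-defined alternating k-bilinear form on the k-vector space 𝓛̃/𝓛 (given by (x̄, ȳ) ↦ ϖ·ω(x,y) mod ϖ), and this form is nondegenerate. Thus both quotients are symplectic vector spaces over the residue field k. -/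
/-!
Since ω is alternating, ω(𝓛, 𝓛̃) and ω(𝓛̃, 𝓛) are both integral; together with
`ϖ𝓛̃ ⊆ 𝓛 ⊆ 𝓛̃` this makes both reduced forms integral and well defined. Nondegeneracy on
`𝓛/ϖ𝓛̃` is the definition of 𝓛̃ after dividing by ϖ. Nondegeneracy on `𝓛̃/𝓛` is biduality
`(𝓛̃)̃ = 𝓛`: over the PID `O` the lattice 𝓛 is free, its basis is an `F`-basis of `W`, and the
dual of the span of a basis is the span of the dual basis.
-/

/-- The dual lattice of a lattice `L` (given as a set) in a space `W` with
bilinear form `ω`, with respect to the ring of integers `O` (sitting in `F` via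
`algebraMap O F`): all `x` pairing `L` into `O`. -/
def dualLattice (O : Type*) {F W : Type*} [CommRing O] [Field F] [Algebra O F]
    [AddCommGroup W] [Module F W]
    (ω : W →ₗ[F] W →ₗ[F] F) (L : Set W) : Set W :=
  {x : W | ∀ ℓ ∈ L, ω x ℓ ∈ (algebraMap O F).range}

open LinearMap (BilinForm)
open Submodule

theorem LinearMap.apply_sub_apply_eq_add {R M N P : Type*} [CommSemiring R] [AddCommGroup M]
    [AddCommGroup N] [AddCommGroup P] [Module R M] [Module R N] [Module R P]
    (B : M →ₗ[R] N →ₗ[R] P) (x x' : M) (y y' : N) :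
    B x y - B x' y' = B (x - x') y + B x' (y - y') := by
  simp only [map_sub, LinearMap.sub_apply]
  abel

namespace LinearMap.BilinForm

variable {O F W : Type*} [CommRing O] [Field F] [Algebra O F] [AddCommGroup W] [Module F W]
  {B : BilinForm F W} {x x' y y' : W}

section

variable {L : Set W}

theorem IsAlt.apply_mem_range_of_mem_dualLattice (hB : B.IsAlt) (hx : x ∈ L)
    (hy : y ∈ dualLattice O B L) : B x y ∈ (algebraMap O F).range := by
  rw [← hB.neg_eq y x]
  exact neg_mem (hy x hx)

theorem IsAlt.apply_sub_apply_mem_range (hB : B.IsAlt) (hx' : x' ∈ dualLattice O B L)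
    (hy : y ∈ dualLattice O B L) (hxx' : x - x' ∈ L) (hyy' : y - y' ∈ L) :
    B x y - B x' y' ∈ (algebraMap O F).range := by
  rw [B.apply_sub_apply_eq_add]
  exact add_mem (hB.apply_mem_range_of_mem_dualLattice hxx' hy) (hx' _ hyy')

end

variable [Module O W] [IsScalarTower O F W] {L : Submodule O W} {ϖ : O}

theorem mem_dualLattice_iff_mem_dualSubmodule :
    x ∈ dualLattice O B L ↔ x ∈ B.dualSubmodule L :=
  forall₂_congr fun _ _ => Submodule.mem_one.symm

theorem IsAlt.dualSubmodule_flip (hB : B.IsAlt) (N : Submodule O W) :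
    B.flip.dualSubmodule N = B.dualSubmodule N := by
  ext x
  simp only [mem_dualSubmodule, flip_apply, ← hB.neg_eq x, neg_mem_iff]

theorem dualSubmodule_flip_dualSubmodule_of_isLattice [IsDomain O]
    [IsPrincipalIdealRing O] [IsFractionRing O F] (hB : B.Nondegenerate)
    (L : Submodule O W) [IsLattice F L] :
    B.flip.dualSubmodule (B.dualSubmodule L) = L := by
  let b := Module.Free.chooseBasis O L
  have hspan : span O (Set.range (b.extendOfIsLattice F)) = L := by
    have hrange : Set.range (b.extendOfIsLattice F) = L.subtype '' Set.range b := by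
      rw [← Set.range_comp]
      exact congrArg Set.range (funext (b.extendOfIsLattice_apply F))
    rw [hrange, ← Submodule.map_span, b.span_eq, Submodule.map_top, Submodule.range_subtype]
  have := dualSubmodule_flip_dualSubmodule_of_basis (R := O) B hB (b.extendOfIsLattice F)
  rwa [hspan] at this

theorem IsAlt.exists_apply_sub_apply_eq_algebraMap_mul (hB : B.IsAlt)
    (hx' : x' ∈ L) (hy : y ∈ L) (hxx' : ∃ z ∈ dualLattice O B L, x - x' = ϖ • z)
    (hyy' : ∃ z ∈ dualLattice O B L, y - y' = ϖ • z) :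
    ∃ a : O, B x y - B x' y' = algebraMap O F (ϖ * a) := by
  obtain ⟨z, hz, hxz⟩ := hxx'
  obtain ⟨z', hz', hyz⟩ := hyy'
  obtain ⟨a, ha⟩ := hz y hy
  obtain ⟨a', ha'⟩ := hB.apply_mem_range_of_mem_dualLattice hx' hz'
  refine ⟨a + a', ?_⟩
  rw [B.apply_sub_apply_eq_add, hxz, hyz, smul_left_of_tower, smul_right_of_tower,
    Algebra.smul_def, Algebra.smul_def, ← ha, ← ha', map_mul, map_add, mul_add]

theorem exists_mem_dualLattice_eq_smul (hϖ : algebraMap O F ϖ ≠ 0)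
    (hx : ∀ y ∈ L, ∃ a : O, B x y = algebraMap O F (ϖ * a)) :
    ∃ z ∈ dualLattice O B L, x = ϖ • z := by
  refine ⟨(algebraMap O F ϖ)⁻¹ • x, fun y hy => ?_, ?_⟩
  · obtain ⟨a, ha⟩ := hx y hy
    refine ⟨a, ?_⟩
    rw [B.smul_left, ha, map_mul]
    exact (inv_mul_cancel_left₀ hϖ _).symm
  · rw [← algebraMap_smul F ϖ, smul_inv_smul₀ hϖ]

theorem algebraMap_mul_apply_mem_range (hL : ∀ z ∈ dualLattice O B L, ϖ • z ∈ L)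
    (hx : x ∈ dualLattice O B L) (hy : y ∈ dualLattice O B L) :
    algebraMap O F ϖ * B x y ∈ (algebraMap O F).range := by
  rw [← Algebra.smul_def, ← smul_right_of_tower]
  exact hx _ (hL y hy)

theorem IsAlt.mem_of_forall_algebraMap_mul_apply [IsDomain O] [IsPrincipalIdealRing O]
    [IsFractionRing O F] (hB : B.IsAlt) (hnd : B.Nondegenerate) [IsLattice F L]
    (hϖ : algebraMap O F ϖ ≠ 0)
    (hx : ∀ y ∈ dualLattice O B L, ∃ a : O, algebraMap O F ϖ * B x y = algebraMap O F (ϖ * a)) :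
    x ∈ L := by
  rw [← dualSubmodule_flip_dualSubmodule_of_isLattice hnd L, hB.dualSubmodule_flip]
  intro y hy
  obtain ⟨a, ha⟩ := hx y (mem_dualLattice_iff_mem_dualSubmodule.mpr hy)
  rw [map_mul] at ha
  exact Submodule.mem_one.mpr ⟨a, (mul_left_cancel₀ hϖ ha).symm⟩

end LinearMap.BilinForm

open LinearMap.BilinForm

theorem statement14_general
    (O : Type*) [CommRing O] [IsDomain O] [IsDiscreteValuationRing O]
    (F : Type*) [Field F] [Algebra O F] [IsFractionRing O F]
    (ϖ : O) (hϖ : Irreducible ϖ)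
    (W : Type*) [AddCommGroup W] [Module O W] [Module F W] [IsScalarTower O F W]
    (ω : W →ₗ[F] W →ₗ[F] F)
    (halt : ∀ x : W, ω x x = 0)
    (hnd : ∀ x : W, (∀ y : W, ω x y = 0) → x = 0)
    (𝓛 : Submodule O W) (hfg : 𝓛.FG)
    (hspan : Submodule.span F (𝓛 : Set W) = ⊤)
    (hsub1 : ∀ x ∈ dualLattice O ω (𝓛 : Set W), ϖ • x ∈ 𝓛)
    (hsub2 : (𝓛 : Set W) ⊆ dualLattice O ω (𝓛 : Set W)) :
    -- (a) the form induced by ω on 𝓛 / ϖ·𝓛̃ :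
    ((∀ x ∈ 𝓛, ∀ y ∈ 𝓛, ω x y ∈ (algebraMap O F).range)
      ∧ (∀ x ∈ 𝓛, ∀ x' ∈ 𝓛, ∀ y ∈ 𝓛, ∀ y' ∈ 𝓛,
          (∃ z ∈ dualLattice O ω (𝓛 : Set W), x - x' = ϖ • z) →
          (∃ z ∈ dualLattice O ω (𝓛 : Set W), y - y' = ϖ • z) →
          ∃ a : O, ω x y - ω x' y' = algebraMap O F (ϖ * a))
      ∧ (∀ x ∈ 𝓛, ∃ a : O, ω x x = algebraMap O F (ϖ * a))
      ∧ (∀ x ∈ 𝓛, (∀ y ∈ 𝓛, ∃ a : O, ω x y = algebraMap O F (ϖ * a)) →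
          ∃ z ∈ dualLattice O ω (𝓛 : Set W), x = ϖ • z))
    ∧ -- (b) the form induced by ϖ·ω on 𝓛̃ / 𝓛 :
    ((∀ x ∈ dualLattice O ω (𝓛 : Set W), ∀ y ∈ dualLattice O ω (𝓛 : Set W),
          algebraMap O F ϖ * ω x y ∈ (algebraMap O F).range)
      ∧ (∀ x ∈ dualLattice O ω (𝓛 : Set W), ∀ x' ∈ dualLattice O ω (𝓛 : Set W),
          ∀ y ∈ dualLattice O ω (𝓛 : Set W), ∀ y' ∈ dualLattice O ω (𝓛 : Set W),
          x - x' ∈ 𝓛 → y - y' ∈ 𝓛 →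
          ∃ a : O, algebraMap O F ϖ * ω x y - algebraMap O F ϖ * ω x' y'
            = algebraMap O F (ϖ * a))
      ∧ (∀ x ∈ dualLattice O ω (𝓛 : Set W), algebraMap O F ϖ * ω x x = 0)
      ∧ (∀ x ∈ dualLattice O ω (𝓛 : Set W),
          (∀ y ∈ dualLattice O ω (𝓛 : Set W),
            ∃ a : O, algebraMap O F ϖ * ω x y = algebraMap O F (ϖ * a)) →
          x ∈ 𝓛)) := by
  have hω : BilinForm.IsAlt ω := halt
  have hωnd : ω.Nondegenerate := hω.isRefl.nondegenerate_iff_separatingLeft.mpr hnd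
  have : IsLattice F 𝓛 := ⟨hfg, hspan⟩
  have hϖ' : algebraMap O F ϖ ≠ 0 :=
    (map_ne_zero_iff _ (IsFractionRing.injective O F)).mpr hϖ.ne_zero
  refine ⟨⟨?_, ?_, ?_, ?_⟩, ?_, ?_, ?_, ?_⟩
  · exact fun x hx y hy => hsub2 hx y hy
  · exact fun x _ x' hx' y hy y' _ => hω.exists_apply_sub_apply_eq_algebraMap_mul hx' hy
  · exact fun x _ => ⟨0, by simp [halt x]⟩
  · exact fun x _ => exists_mem_dualLattice_eq_smul hϖ'
  · exact fun x hx y hy => algebraMap_mul_apply_mem_range hsub1 hx hy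
  · intro x _ x' hx' y hy y' _ hxx' hyy'
    obtain ⟨a, ha⟩ := hω.apply_sub_apply_mem_range hx' hy hxx' hyy'
    exact ⟨a, by rw [map_mul, ha, mul_sub]⟩
  · exact fun x _ => by simp [halt x]
  · exact fun x _ => hω.mem_of_forall_algebraMap_mul_apply hωnd hϖ'

/-- Let `F` be a finite extension of `ℚ_p` with ring of integers
`O` (a DVR with uniformizer `ϖ`) and `(W, ω)` a symplectic `F`-space.  Let `𝓛`
be a lattice with `ϖ·𝓛̃ ⊆ 𝓛 ⊆ 𝓛̃` where `𝓛̃` is its dual lattice.  Then: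
(a) `ω mod ϖ` induces a well-defined alternating nondegenerate form on
`𝓛/ϖ𝓛̃` (expressed here via congruences: values of `ω` on `𝓛` are integral,
depend `mod ϖ` only on the classes `mod ϖ𝓛̃`, vanish on the diagonal `mod ϖ`,
and an element of `𝓛` pairing `𝓛` into `ϖO` lies in `ϖ𝓛̃`); and
(b) `ϖ·ω mod ϖ` induces a well-defined alternating nondegenerate form on
`𝓛̃/𝓛` (similarly expressed via congruences).  Thus both quotients are
symplectic vector spaces over the residue field `k = O/(ϖ)`. -/
theorem statement14 (p : ℕ) [Fact p.Prime]
    (O : Type*) [CommRing O] [IsDomain O] [IsDiscreteValuationRing O]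
    (F : Type*) [Field F] [Algebra O F] [IsFractionRing O F]
    [Algebra ℚ_[p] F] [FiniteDimensional ℚ_[p] F]
    (ϖ : O) (hϖ : Irreducible ϖ)
    (W : Type*) [AddCommGroup W] [Module O W] [Module F W] [IsScalarTower O F W]
    [FiniteDimensional F W]
    (ω : W →ₗ[F] W →ₗ[F] F)
    (halt : ∀ x : W, ω x x = 0)
    (hnd : ∀ x : W, (∀ y : W, ω x y = 0) → x = 0)
    (𝓛 : Submodule O W) (hfg : 𝓛.FG)
    (hspan : Submodule.span F (𝓛 : Set W) = ⊤)
    (hsub1 : ∀ x ∈ dualLattice O ω (𝓛 : Set W), ϖ • x ∈ 𝓛)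
    (hsub2 : (𝓛 : Set W) ⊆ dualLattice O ω (𝓛 : Set W)) :
    -- (a) the form induced by ω on 𝓛 / ϖ·𝓛̃ :
    ((∀ x ∈ 𝓛, ∀ y ∈ 𝓛, ω x y ∈ (algebraMap O F).range)
      ∧ (∀ x ∈ 𝓛, ∀ x' ∈ 𝓛, ∀ y ∈ 𝓛, ∀ y' ∈ 𝓛,
          (∃ z ∈ dualLattice O ω (𝓛 : Set W), x - x' = ϖ • z) →
          (∃ z ∈ dualLattice O ω (𝓛 : Set W), y - y' = ϖ • z) →
          ∃ a : O, ω x y - ω x' y' = algebraMap O F (ϖ * a))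
      ∧ (∀ x ∈ 𝓛, ∃ a : O, ω x x = algebraMap O F (ϖ * a))
      ∧ (∀ x ∈ 𝓛, (∀ y ∈ 𝓛, ∃ a : O, ω x y = algebraMap O F (ϖ * a)) →
          ∃ z ∈ dualLattice O ω (𝓛 : Set W), x = ϖ • z))
    ∧ -- (b) the form induced by ϖ·ω on 𝓛̃ / 𝓛 :
    ((∀ x ∈ dualLattice O ω (𝓛 : Set W), ∀ y ∈ dualLattice O ω (𝓛 : Set W),
          algebraMap O F ϖ * ω x y ∈ (algebraMap O F).range)
      ∧ (∀ x ∈ dualLattice O ω (𝓛 : Set W), ∀ x' ∈ dualLattice O ω (𝓛 : Set W),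
          ∀ y ∈ dualLattice O ω (𝓛 : Set W), ∀ y' ∈ dualLattice O ω (𝓛 : Set W),
          x - x' ∈ 𝓛 → y - y' ∈ 𝓛 →
          ∃ a : O, algebraMap O F ϖ * ω x y - algebraMap O F ϖ * ω x' y'
            = algebraMap O F (ϖ * a))
      ∧ (∀ x ∈ dualLattice O ω (𝓛 : Set W), algebraMap O F ϖ * ω x x = 0)
      ∧ (∀ x ∈ dualLattice O ω (𝓛 : Set W),
          (∀ y ∈ dualLattice O ω (𝓛 : Set W),
            ∃ a : O, algebraMap O F ϖ * ω x y = algebraMap O F (ϖ * a)) →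
          x ∈ 𝓛)) :=
  statement14_general O F ϖ hϖ W ω halt hnd 𝓛 hfg hspan hsub1 hsub2
end
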